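/- Let Q be a row-finite quiver with hereditary saturated closure H of its set of line points. If u₁,…,u_k are distinct vertices not in H such that u₁ is a line point of Q∖H and for each i there is an arrow from uᵢ to u_{i+1}, then there exists a vertex u_{k+1} ∉ {u₁,…,u_k} ∪ H with an arrow from u_k to u_{k+1}. Consequently, if Q₀ is finite, then Q∖H has no line points. -/

import Mathlib

structure Quiv where
  V : Type
  E : Type
  s : E → V
  r : E → V

namespace Quiv

def kron (Q Q' : Quiv) : Quiv :=
  ⟨Q.V × Q'.V, Q.E × Q'.E, fun e => (Q.s e.1, Q'.s e.2), fun e => (Q.r e.1, Q'.r e.2)⟩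

def IsSink (Q : Quiv) (v : Q.V) : Prop := ∀ e, Q.s e ≠ v

def IsSource (Q : Quiv) (v : Q.V) : Prop := ∀ e, Q.r e ≠ v

def Isolated (Q : Quiv) (v : Q.V) : Prop := Q.IsSink v ∧ Q.IsSource v

inductive Reach (Q : Quiv) : Q.V → Q.V → Prop
  | refl (v : Q.V) : Reach Q v v
  | step (e : Q.E) {v : Q.V} : Reach Q (Q.r e) v → Reach Q (Q.s e) v

inductive PathN (Q : Quiv) : ℕ → Q.V → Q.V → Prop
  | nil (v : Q.V) : PathN Q 0 v v
  | cons (e : Q.E) {n : ℕ} {v : Q.V} : PathN Q n (Q.r e) v → PathN Q (n + 1) (Q.s e) v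

def IsClosedPath (Q : Quiv) (l : List Q.E) : Prop :=
  l ≠ [] ∧ l.Chain' (fun e f => Q.r e = Q.s f) ∧
    l.getLast?.map Q.r = l.head?.map Q.s

def IsCycle (Q : Quiv) (l : List Q.E) : Prop :=
  Q.IsClosedPath l ∧ (l.map Q.s).Nodup

end Quiv

namespace Quiv

def IsBifurcation (Q : Quiv) (v : Q.V) : Prop :=
  ∃ e f : Q.E, e ≠ f ∧ Q.s e = v ∧ Q.s f = v

/-- A line point: no vertex reachable from `u` is a bifurcation or lies on a closed path. -/
def IsLinePoint (Q : Quiv) (u : Q.V) : Prop :=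
  ∀ w : Q.V, Q.Reach u w →
    ¬ Q.IsBifurcation w ∧ ¬ ∃ e : Q.E, Q.s e = w ∧ Q.Reach (Q.r e) w

def Hereditary (Q : Quiv) (H : Set Q.V) : Prop := ∀ e : Q.E, Q.s e ∈ H → Q.r e ∈ H

def IsRegular (Q : Quiv) (v : Q.V) : Prop :=
  (∃ e : Q.E, Q.s e = v) ∧ {e : Q.E | Q.s e = v}.Finite

def Saturated (Q : Quiv) (H : Set Q.V) : Prop :=
  ∀ v : Q.V, Q.IsRegular v → (∀ e : Q.E, Q.s e = v → Q.r e ∈ H) → v ∈ H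

/-- The hereditary saturated closure of a set of vertices. -/
def hsClosure (Q : Quiv) (X : Set Q.V) : Set Q.V :=
  ⋂₀ {H : Set Q.V | X ⊆ H ∧ Q.Hereditary H ∧ Q.Saturated H}

/-- The quiver obtained by removing a set of vertices and all incident arrows. -/
def minus (Q : Quiv) (H : Set Q.V) : Quiv :=
  ⟨{v : Q.V // v ∉ H}, {e : Q.E // Q.s e ∉ H ∧ Q.r e ∉ H},
    fun e => ⟨Q.s e.1, e.2.1⟩, fun e => ⟨Q.r e.1, e.2.2⟩⟩

def RowFinite (Q : Quiv) : Prop := ∀ v : Q.V, {e : Q.E | Q.s e = v}.Finite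

end Quiv

/-! A vertex outside `H` is not a sink, since sinks are line points, and it is regular, so by
saturation it emits an arrow whose range is again outside `H`. That arrow cannot return to the
chain: the last vertex would then lie on a closed path of `Q ∖ H` reachable from the line
point `u₁`. In particular `Q ∖ H` has no sinks, and when it is finite, following arrows from
any vertex eventually revisits a vertex, which then lies on a closed path. -/

namespace Quiv

variable {Q : Quiv}

theorem Reach.trans {u v w : Q.V} (huv : Q.Reach u v) (hvw : Q.Reach v w) : Q.Reach u w := by
  induction huv with
  | refl => exact hvw
  | step e _ ih => exact .step e (ih hvw)

theorem Reach.single (e : Q.E) : Q.Reach (Q.s e) (Q.r e) := .step e (.refl _)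

theorem reach_of_chain {k : ℕ} (u : Fin k → Q.V)
    (hchain : ∀ i j : Fin k, (j : ℕ) = i + 1 → ∃ e : Q.E, Q.s e = u i ∧ Q.r e = u j)
    {i j : Fin k} (hij : i ≤ j) : Q.Reach (u i) (u j) := by
  obtain ⟨j, hj⟩ := j
  change (i : ℕ) ≤ j at hij
  induction j, hij using Nat.le_induction with
  | base => exact .refl _
  | succ j hij ih =>
    obtain ⟨e, hs, hr⟩ := hchain ⟨j, by omega⟩ ⟨j + 1, hj⟩ rfl
    exact (ih (by omega)).trans (hs ▸ hr ▸ Reach.single e)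

theorem IsSink.isLinePoint {v : Q.V} (hv : Q.IsSink v) : Q.IsLinePoint v := by
  rintro w (_ | ⟨e, _⟩)
  · exact ⟨fun ⟨e, _, _, he, _⟩ => hv e he, fun ⟨e, he, _⟩ => hv e he⟩
  · exact absurd rfl (hv e)

theorem not_isLinePoint_of_forall_not_isSink [Finite Q.V] (hQ : ∀ w, ¬ Q.IsSink w) (v : Q.V) :
    ¬ Q.IsLinePoint v := by
  intro hv
  choose next hnext using fun w => not_forall_not.mp (hQ w)
  set f : ℕ → Q.V := fun n => (Q.r ∘ next)^[n] v
  have hf : ∀ n, Q.s (next (f n)) = f n ∧ Q.r (next (f n)) = f (n + 1) := fun n =>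
    ⟨hnext _, (Function.iterate_succ_apply' (Q.r ∘ next) n v).symm⟩
  have hreach : ∀ {i j : ℕ}, i ≤ j → Q.Reach (f i) (f j) := fun {i j} hij =>
    reach_of_chain (fun l : Fin (j + 1) => f l)
      (fun a b hab => ⟨next (f a), (hf a).1, hab ▸ (hf a).2⟩)
      (i := ⟨i, by omega⟩) (j := Fin.last j) (Fin.mk_le_mk.mpr hij)
  suffices ∀ i j, i < j → f i ≠ f j by
    obtain ⟨i, j, hne, heq⟩ := Finite.exists_ne_map_eq_of_infinite f
    rcases hne.lt_or_gt with hij | hji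
    exacts [this i j hij heq, this j i hji heq.symm]
  intro i j hij hfij
  refine (hv (f i) (hreach (Nat.zero_le i))).2 ⟨next (f i), (hf i).1, ?_⟩
  rw [(hf i).2, hfij]
  exact hreach hij

theorem subset_hsClosure (X : Set Q.V) : X ⊆ Q.hsClosure X :=
  fun _ hx => Set.mem_sInter.2 fun _ hK => hK.1 hx

theorem hsClosure_saturated (X : Set Q.V) : Q.Saturated (Q.hsClosure X) :=
  fun v hreg hall => Set.mem_sInter.2 fun K hK =>
    hK.2.2 v hreg fun e he => Set.mem_sInter.1 (hall e he) K hK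

theorem exists_arrow_not_mem_hsClosure {X : Set Q.V} (hX : ∀ v, Q.IsSink v → v ∈ X) {v : Q.V}
    (hfin : {e : Q.E | Q.s e = v}.Finite) (hv : v ∉ Q.hsClosure X) :
    ∃ e : Q.E, Q.s e = v ∧ Q.r e ∉ Q.hsClosure X := by
  by_contra! hall
  have hemits : ∃ e : Q.E, Q.s e = v := by
    by_contra! hsink
    exact hv (subset_hsClosure X (hX v hsink))
  exact hv (hsClosure_saturated X v ⟨hemits, hfin⟩ hall)

theorem exists_minus_arrow {H : Set Q.V} (e : Q.E) {a b : (Q.minus H).V}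
    (hs : Q.s e = a.val) (hr : Q.r e = b.val) :
    ∃ e' : (Q.minus H).E, (Q.minus H).s e' = a ∧ (Q.minus H).r e' = b :=
  ⟨⟨e, hs ▸ a.2, hr ▸ b.2⟩, Subtype.ext hs, Subtype.ext hr⟩

end Quiv

/-- Extension of chains of vertices outside the hereditary saturated closure of line
points, and consequently: if the vertex set is finite, `Q ∖ H` has no line points. -/
theorem linePoint_chain_extends_and_finite_case (Q : Quiv) (hrow : Q.RowFinite)
    (H : Set Q.V) (hH : H = Q.hsClosure {v : Q.V | Q.IsLinePoint v}) :
    (∀ (k : ℕ) (hk : 0 < k) (u : Fin k → Q.V),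
      Function.Injective u →
      ∀ (hu : ∀ i, u i ∉ H),
      (Q.minus H).IsLinePoint ⟨u ⟨0, hk⟩, hu ⟨0, hk⟩⟩ →
      (∀ i j : Fin k, (j : ℕ) = (i : ℕ) + 1 → ∃ e : Q.E, Q.s e = u i ∧ Q.r e = u j) →
      ∃ w : Q.V, w ∉ H ∧ (∀ i, w ≠ u i) ∧
        ∃ e : Q.E, Q.s e = u ⟨k - 1, by omega⟩ ∧ Q.r e = w) ∧
    (Finite Q.V → ∀ w : (Q.minus H).V, ¬ (Q.minus H).IsLinePoint w) := by
  have hleave : ∀ v ∉ H, ∃ e : Q.E, Q.s e = v ∧ Q.r e ∉ H := fun v hv =>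
    hH ▸ Quiv.exists_arrow_not_mem_hsClosure (fun _ hw => hw.isLinePoint) (hrow v) (hH ▸ hv)
  refine ⟨fun k hk u _ hu hlp hchain => ?_, fun _ w => ?_⟩
  · obtain ⟨e, hs, hr⟩ := hleave _ (hu ⟨k - 1, by omega⟩)
    refine ⟨Q.r e, hr, fun j hj => ?_, e, hs, rfl⟩
    set u' : Fin k → (Q.minus H).V := fun i => ⟨u i, hu i⟩
    have hchain' : ∀ i j : Fin k, (j : ℕ) = i + 1 →
        ∃ e, (Q.minus H).s e = u' i ∧ (Q.minus H).r e = u' j := fun i j hij =>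
      let ⟨e, hs, hr⟩ := hchain i j hij
      Quiv.exists_minus_arrow e hs hr
    obtain ⟨e', hs', hr'⟩ :=
      Quiv.exists_minus_arrow (a := u' ⟨k - 1, by omega⟩) (b := u' j) e hs hj
    have hreach_last : (Q.minus H).Reach (u' ⟨0, hk⟩) (u' ⟨k - 1, by omega⟩) :=
      Quiv.reach_of_chain u' hchain' (Fin.mk_le_mk.mpr (Nat.zero_le _))
    refine (hlp _ hreach_last).2 ⟨e', hs', ?_⟩
    rw [hr']
    exact Quiv.reach_of_chain u' hchain' (Fin.mk_le_mk.mpr (Nat.le_sub_one_of_lt j.isLt))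
  · have : Finite (Q.minus H).V := Subtype.finite
    refine Quiv.not_isLinePoint_of_forall_not_isSink (fun w hw => ?_) w
    obtain ⟨e, hs, hr⟩ := hleave w.val w.2
    exact hw ⟨e, hs ▸ w.2, hr⟩ (Subtype.ext hs)
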